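/- arXiv:1411.1385 — 3 statements merged into one kernel-verified Lean document; each statement's English description precedes it below -/
import Mathlib

section
/- Let M be an n×n non-negative matrix with leading eigenvalue λ > 0 and let w be a positive eigenvector of M^T for λ normalized so that Σ w_i = 1. Define x_0 = 0 and x_i = w_1 + ⋯ + w_i. Suppose M is an odd-block {0,1}-matrix with associated map φ, and in column j the 1-entries occupy rows min{φ(j-1),φ(j)}+1 through max{φ(j-1),φ(j)}. Then for each j, |x_{φ(j)} − x_{φ(j-1)}| = λ·(x_j − x_{j-1}). -/
/-! The interval `(x_{j-1}, x_j)` has length `w_j`, and the interval between `x_{φ(j-1)}` and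
`x_{φ(j)}` has length the sum of the `w_i` over the rows `i` where column `j` of `M` is `1`, that is
`(Mᵀ w)_j`. The eigenvector equation `Mᵀ w = λ w` identifies the second length with `λ` times the
first. -/

open Finset Matrix

section PrefixSums

variable {α : Type*} {n : ℕ}

lemma sum_ite_lt_sub_sum_ite_lt [AddCommGroup α] (w : Fin n → α) {k m : ℕ} (hkm : k ≤ m) :
    (∑ i : Fin n, if (i : ℕ) < m then w i else 0) - (∑ i : Fin n, if (i : ℕ) < k then w i else 0)
      = ∑ i : Fin n, if k ≤ (i : ℕ) ∧ (i : ℕ) < m then w i else 0 := by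
  rw [← sum_sub_distrib]
  refine sum_congr rfl fun i _ => ?_
  split_ifs <;> first | omega | abel

lemma sum_ite_lt_succ_sub_sum_ite_lt [AddCommGroup α] (w : Fin n → α) (j : Fin n) :
    (∑ i : Fin n, if (i : ℕ) < j + 1 then w i else 0)
      - (∑ i : Fin n, if (i : ℕ) < j then w i else 0) = w j := by
  have hsingle (i : Fin n) : (j : ℕ) ≤ i ∧ (i : ℕ) < j + 1 ↔ j = i := by
    rw [Fin.ext_iff]; omega
  simp_rw [sum_ite_lt_sub_sum_ite_lt w (Nat.le_succ j), hsingle, sum_ite_eq, if_pos (mem_univ j)]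

lemma abs_sum_ite_lt_sub_sum_ite_lt [AddCommGroup α] [LinearOrder α] [IsOrderedAddMonoid α]
    {w : Fin n → α} (hw : ∀ i, 0 ≤ w i) (k m : ℕ) :
    |(∑ i : Fin n, if (i : ℕ) < m then w i else 0) - (∑ i : Fin n, if (i : ℕ) < k then w i else 0)|
      = ∑ i : Fin n, if min k m ≤ (i : ℕ) ∧ (i : ℕ) < max k m then w i else 0 := by
  have hnonneg (a b : ℕ) : 0 ≤ ∑ i : Fin n, if a ≤ (i : ℕ) ∧ (i : ℕ) < b then w i else 0 :=
    sum_nonneg fun i _ => by split_ifs <;> simp [hw i]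
  rcases le_total k m with hkm | hmk
  · rw [sum_ite_lt_sub_sum_ite_lt w hkm, min_eq_left hkm, max_eq_right hkm,
      abs_of_nonneg (hnonneg k m)]
  · rw [abs_sub_comm, sum_ite_lt_sub_sum_ite_lt w hmk, min_eq_right hmk, max_eq_left hmk,
      abs_of_nonneg (hnonneg m k)]

end PrefixSums

lemma Matrix.transpose_mulVec_apply_eq_sum_ite {ι κ R : Type*} [Fintype ι] [NonAssocSemiring R]
    (M : Matrix ι κ R) (w : ι → R) (j : κ) (p : ι → Prop) [DecidablePred p]
    (h01 : ∀ i, M i j = 0 ∨ M i j = 1) (hp : ∀ i, M i j = 1 ↔ p i) :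
    (Mᵀ *ᵥ w) j = ∑ i, if p i then w i else 0 := by
  simp only [mulVec, dotProduct, transpose_apply]
  refine sum_congr rfl fun i _ => ?_
  split_ifs with hpi
  · rw [(hp i).2 hpi, one_mul]
  · rw [(h01 i).resolve_right (mt (hp i).1 hpi), zero_mul]

theorem interval_map_constant_slope_general
    (n : ℕ) (M : Matrix (Fin n) (Fin n) ℝ)
    (h01 : ∀ i j, M i j = 0 ∨ M i j = 1)
    (lam : ℝ)
    (w : Fin n → ℝ) (hw : ∀ i, 0 < w i)
    (heig : M.transpose.mulVec w = lam • w)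
    (x : Fin (n + 1) → ℝ)
    (hx : ∀ k : Fin (n + 1), x k = ∑ i : Fin n, if (i : ℕ) < (k : ℕ) then w i else 0)
    (φ : Fin (n + 1) → Fin (n + 1))
    -- column j has entries 1 exactly in rows min{φ(j-1),φ(j)}+1 through max{φ(j-1),φ(j)}
    (hcol : ∀ i j : Fin n, M i j = 1 ↔
      (min ((φ j.castSucc : Fin (n+1)) : ℕ) ((φ j.succ : Fin (n+1)) : ℕ) < (i : ℕ) + 1 ∧
       (i : ℕ) + 1 ≤ max ((φ j.castSucc : Fin (n+1)) : ℕ) ((φ j.succ : Fin (n+1)) : ℕ))) :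
    ∀ j : Fin n, |x (φ j.succ) - x (φ j.castSucc)| = lam * (x j.succ - x j.castSucc) := by
  intro j
  have hcolumn : (Mᵀ *ᵥ w) j = ∑ i : Fin n, if min (φ j.castSucc : ℕ) (φ j.succ) ≤ (i : ℕ) ∧
      (i : ℕ) < max (φ j.castSucc : ℕ) (φ j.succ) then w i else 0 :=
    M.transpose_mulVec_apply_eq_sum_ite w j _ (h01 · j) fun i => (hcol i j).trans (by omega)
  simp only [hx, Fin.val_succ, Fin.val_castSucc]
  rw [abs_sum_ite_lt_sub_sum_ite_lt (fun i => (hw i).le), sum_ite_lt_succ_sub_sum_ite_lt,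
    ← hcolumn, heig, Pi.smul_apply, smul_eq_mul]

/-- Let `M` be an `n×n` non-negative matrix with leading eigenvalue
`lam > 0` and `w` a positive eigenvector of `Mᵀ` for `lam`, normalized with `Σ w_i = 1`.
Let `x_0 = 0`, `x_i = w_1 + ⋯ + w_i`. If `M` is an odd-block `{0,1}`-matrix with
associated map `φ`, column `j` having 1-entries exactly in rows
`min{φ(j-1),φ(j)}+1, …, max{φ(j-1),φ(j)}`, then for each `j`,
`|x_{φ(j)} − x_{φ(j-1)}| = lam·(x_j − x_{j-1})`. -/
theorem interval_map_constant_slope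
    (n : ℕ) (M : Matrix (Fin n) (Fin n) ℝ)
    (h01 : ∀ i j, M i j = 0 ∨ M i j = 1)
    (lam : ℝ) (hlam : 0 < lam)
    (w : Fin n → ℝ) (hw : ∀ i, 0 < w i)
    (heig : M.transpose.mulVec w = lam • w)
    (hnorm : ∑ i, w i = 1)
    (x : Fin (n + 1) → ℝ)
    (hx : ∀ k : Fin (n + 1), x k = ∑ i : Fin n, if (i : ℕ) < (k : ℕ) then w i else 0)
    (φ : Fin (n + 1) → Fin (n + 1))
    -- column j has entries 1 exactly in rows min{φ(j-1),φ(j)}+1 through max{φ(j-1),φ(j)}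
    (hcol : ∀ i j : Fin n, M i j = 1 ↔
      (min ((φ j.castSucc : Fin (n+1)) : ℕ) ((φ j.succ : Fin (n+1)) : ℕ) < (i : ℕ) + 1 ∧
       (i : ℕ) + 1 ≤ max ((φ j.castSucc : Fin (n+1)) : ℕ) ((φ j.succ : Fin (n+1)) : ℕ))) :
    ∀ j : Fin n, |x (φ j.succ) - x (φ j.castSucc)| = lam * (x j.succ - x j.castSucc) :=
  interval_map_constant_slope_general n M h01 lam w hw heig x hx φ hcol
end

section
/- Let h: [0,1] → [0,1] be piecewise linear with constant slope ±λ where λ > 1, with break points 0 = x_0 < ⋯ < x_n = 1 permuted by h. Suppose a cycle of the permutation φ (induced by h on the break points) contains no topological critical point of h. Then removing the points of that cycle from the partition yields a coarser partition on which h is still piecewise linear with slope ±λ, and the associated transition matrix is again a {0,1}-matrix with the same leading eigenvalue λ. -/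
/-!
On each interval of the partition `h` is affine with slope `c = ±lam`. At a break point
`x_i` of the cycle, `h` is injective on the two adjacent intervals, so their slopes cannot be
opposite (otherwise `h (x_i - ε) = h (x_i + ε)`); hence they agree and `h` is affine on the
union. The complement of a `φ`-invariant set is `φ`-invariant, so the surviving break points
are still mapped to break points. The image of a coarse interval `J` is therefore the union
of the consecutive coarse intervals between the images of its endpoints, of total length
`lam * |J|`: this says that the vector of lengths is a left `lam`-eigenvector of the
`{0,1}` transition matrix.
-/

open Set

def HasSlopeOn (f : ℝ → ℝ) (c : ℝ) (s : Set ℝ) : Prop :=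
  ∀ u ∈ s, ∀ v ∈ s, f u - f v = c * (u - v)

namespace HasSlopeOn

variable {f : ℝ → ℝ} {c : ℝ} {s t : Set ℝ}

theorem mono (hf : HasSlopeOn f c t) (hst : s ⊆ t) : HasSlopeOn f c s :=
  fun u hu v hv => hf u (hst hu) v (hst hv)

theorem union {a : ℝ} (hs : HasSlopeOn f c s) (ht : HasSlopeOn f c t) (has : a ∈ s)
    (hat : a ∈ t) : HasSlopeOn f c (s ∪ t) := by
  have key : ∀ u ∈ s ∪ t, f u - f a = c * (u - a) := by
    rintro u (hu | hu)
    exacts [hs u hu a has, ht u hu a hat]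
  intro u hu v hv
  linear_combination key u hu - key v hv

theorem abs_sub_eq (hf : HasSlopeOn f c s) {u v : ℝ} (hu : u ∈ s) (hv : v ∈ s) :
    |f u - f v| = |c| * |u - v| := by
  rw [hf u hu v hv, abs_mul]

theorem monotoneOn_or_antitoneOn (hf : HasSlopeOn f c s) : MonotoneOn f s ∨ AntitoneOn f s := by
  rcases le_total 0 c with hc | hc
  · refine .inl fun u hu v hv huv => ?_
    nlinarith [hf v hv u hu]
  · refine .inr fun u hu v hv huv => ?_
    nlinarith [hf v hv u hu]

theorem image_uIcc {p q : ℝ} (hf : HasSlopeOn f c (uIcc p q)) :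
    f '' uIcc p q = uIcc (f p) (f q) := by
  have hp : p ∈ uIcc p q := left_mem_uIcc
  have hq : q ∈ uIcc p q := right_mem_uIcc
  have : EqOn f (fun u => f p + c * (u - p)) (uIcc p q) := fun u hu => by
    linear_combination hf u hu p hp
  rw [image_congr this, ← image_image (fun w => f p + w), ← image_image (c * ·),
    image_sub_const_uIcc, image_const_mul_uIcc, image_const_add_uIcc, this hq, sub_self,
    mul_zero, add_zero]

theorem not_injOn_of_neg {a b d : ℝ} (hab : a < b) (hbd : b < d)
    (hl : HasSlopeOn f c (Icc a b)) (hr : HasSlopeOn f (-c) (Icc b d)) :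
    ¬ InjOn f (Icc a d) := by
  intro hinj
  set ε := min (b - a) (d - b)
  have hε : 0 < ε := lt_min (by linarith) (by linarith)
  have hε₁ : ε ≤ b - a := min_le_left _ _
  have hε₂ : ε ≤ d - b := min_le_right _ _
  have heq : f (b - ε) = f (b + ε) := by
    linear_combination hl (b - ε) ⟨by linarith, by linarith⟩ b ⟨hab.le, le_rfl⟩ -
      hr (b + ε) ⟨by linarith, by linarith⟩ b ⟨le_rfl, hbd.le⟩
  have := hinj ⟨by linarith, by linarith⟩ ⟨by linarith, by linarith⟩ heq
  linarith

end HasSlopeOn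

theorem exists_abs_eq_hasSlopeOn {f : ℝ → ℝ} {lam : ℝ} {s : Set ℝ} (hlam : 0 ≤ lam)
    (hmono : MonotoneOn f s ∨ AntitoneOn f s)
    (habs : ∀ u ∈ s, ∀ v ∈ s, |f u - f v| = lam * |u - v|) :
    ∃ c, |c| = lam ∧ HasSlopeOn f c s := by
  rcases hmono with hf | hf
  · refine ⟨lam, abs_of_nonneg hlam, fun u hu v hv => ?_⟩
    have := habs u hu v hv
    rcases le_total u v with huv | huv
    · rw [abs_of_nonpos (sub_nonpos.2 (hf hu hv huv)), abs_of_nonpos (sub_nonpos.2 huv)]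
        at this
      linarith
    · rw [abs_of_nonneg (sub_nonneg.2 (hf hv hu huv)), abs_of_nonneg (sub_nonneg.2 huv)]
        at this
      linarith
  · refine ⟨-lam, by rw [abs_neg, abs_of_nonneg hlam], fun u hu v hv => ?_⟩
    have := habs u hu v hv
    rcases le_total u v with huv | huv
    · rw [abs_of_nonneg (sub_nonneg.2 (hf hu hv huv)), abs_of_nonpos (sub_nonpos.2 huv)]
        at this
      linarith
    · rw [abs_of_nonpos (sub_nonpos.2 (hf hv hu huv)), abs_of_nonneg (sub_nonneg.2 huv)]
        at this
      linarith

theorem exists_abs_eq_hasSlopeOn_Icc_of_injOn {f : ℝ → ℝ} {X : ℕ → ℝ} {lam : ℝ}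
    {p q : ℕ} (hpq : p < q) (hX : StrictMonoOn X (Icc p q))
    (hpiece : ∀ k, p ≤ k → k < q →
      ∃ c, |c| = lam ∧ HasSlopeOn f c (Icc (X k) (X (k + 1))))
    (hinj : ∀ k, p < k → k < q → InjOn f (Icc (X (k - 1)) (X (k + 1)))) :
    ∃ c, |c| = lam ∧ HasSlopeOn f c (Icc (X p) (X q)) := by
  induction q, hpq using Nat.le_induction with
  | base => exact hpiece p le_rfl p.lt_succ_self
  | succ r hpr ih =>
    have hlt : ∀ {i j}, p ≤ i → i < j → j ≤ r + 1 → X i < X j := fun hi hij hj =>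
      hX ⟨hi, by omega⟩ ⟨by omega, hj⟩ hij
    have hle : ∀ {i j}, p ≤ i → i ≤ j → j ≤ r + 1 → X i ≤ X j := fun hi hij hj =>
      hX.monotoneOn ⟨hi, by omega⟩ ⟨by omega, hj⟩ hij
    obtain ⟨c, hc, hl⟩ := ih (hX.mono (Icc_subset_Icc_right r.le_succ))
      (fun k hk hkr => hpiece k hk (by omega)) (fun k hk hkr => hinj k hk (by omega))
    obtain ⟨c', hc', hr⟩ := hpiece r (by omega) r.lt_succ_self
    have hpr' : X p ≤ X r := hle le_rfl (by omega) (by omega)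
    have hrr : X r < X (r + 1) := hlt (by omega) r.lt_succ_self le_rfl
    rcases abs_eq_abs.1 (hc'.trans hc.symm) with rfl | rfl
    · refine ⟨c', hc', ?_⟩
      rw [← Icc_union_Icc_eq_Icc hpr' hrr.le]
      exact hl.union hr ⟨hpr', le_rfl⟩ ⟨le_rfl, hrr.le⟩
    · refine absurd (hinj r hpr r.lt_succ_self) (HasSlopeOn.not_injOn_of_neg ?_ hrr ?_ hr)
      · exact hlt (by omega) (by omega) (by omega)
      · exact hl.mono (Icc_subset_Icc_left (hle le_rfl (by omega) (by omega)))

theorem exists_abs_eq_hasSlopeOn_Icc_fin {n : ℕ} {x : Fin (n + 1) → ℝ} (hx : StrictMono x)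
    {f : ℝ → ℝ} {lam : ℝ}
    (hpiece : ∀ j : Fin n, ∃ c, |c| = lam ∧ HasSlopeOn f c (Icc (x j.castSucc) (x j.succ)))
    {p q : Fin (n + 1)} (hpq : p < q)
    (hinj : ∀ k, p < k → k < q → ∃ hk0 : 0 < (k : ℕ), ∃ hkn : (k : ℕ) < n,
      InjOn f (Icc (x ⟨(k : ℕ) - 1, by omega⟩) (x ⟨(k : ℕ) + 1, by omega⟩))) :
    ∃ c, |c| = lam ∧ HasSlopeOn f c (Icc (x p) (x q)) := by
  set X : ℕ → ℝ := fun k => x (Fin.clamp k n)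
  have hX : ∀ k (hk : k < n + 1), X k = x ⟨k, hk⟩ := fun k hk =>
    congrArg x (Fin.ext (by simp; omega))
  have hXmono : StrictMonoOn X (Icc p q) := fun i ⟨_, hi⟩ j ⟨_, hj⟩ hij => by
    rw [hX i (by omega), hX j (by omega)]
    exact hx (Fin.mk_lt_mk.2 hij)
  obtain ⟨c, hc, hf⟩ := exists_abs_eq_hasSlopeOn_Icc_of_injOn hpq hXmono
    (fun k hpk hkq => by
      rw [hX k (by omega), hX (k + 1) (by omega)]
      exact hpiece ⟨k, by omega⟩)
    (fun k hpk hkq => by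
      obtain ⟨_, _, hk⟩ := hinj ⟨k, by omega⟩ (Fin.mk_lt_mk.2 hpk) (Fin.mk_lt_mk.2 hkq)
      rw [hX (k - 1) (by omega), hX (k + 1) (by omega)]
      exact hk)
  exact ⟨c, hc, by simpa only [hX _ p.isLt, hX _ q.isLt] using hf⟩

theorem Fin.sum_succ_sub_castSucc {G : Type*} [AddCommGroup G] {m : ℕ} (g : Fin (m + 1) → G) :
    ∑ i : Fin m, (g i.succ - g i.castSucc) = g (Fin.last m) - g 0 := by
  induction m with
  | zero => simp
  | succ m ih =>
    rw [Fin.sum_univ_castSucc]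
    simp only [Fin.succ_castSucc]
    rw [ih (fun i => g i.castSucc), Fin.succ_last, Fin.castSucc_zero]
    abel

open Classical in
theorem sum_ite_Icc_subset_Icc_mul_sub {m : ℕ} {y : Fin (m + 1) → ℝ} (hy : StrictMono y)
    {a b : Fin (m + 1)} (hab : a ≤ b) :
    ∑ i : Fin m, (if Icc (y i.castSucc) (y i.succ) ⊆ Icc (y a) (y b) then 1 else 0) *
      (y i.succ - y i.castSucc) = y b - y a := by
  have hcond (i : Fin m) :
      Icc (y i.castSucc) (y i.succ) ⊆ Icc (y a) (y b) ↔ a ≤ i.castSucc ∧ i.succ ≤ b := by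
    rw [Icc_subset_Icc_iff (hy i.castSucc_lt_succ).le, hy.le_iff_le, hy.le_iff_le]
  -- the term of index `i` telescopes along the clamp of `k` to `[a, b]`
  let g (k : Fin (m + 1)) : ℝ := y (max a (min k b))
  calc _ = ∑ i : Fin m, (g i.succ - g i.castSucc) := Finset.sum_congr rfl fun i _ => by
        simp only [hcond, g, ite_mul, one_mul, zero_mul]
        split_ifs with hi
        · have hi' := i.castSucc_lt_succ.le
          rw [min_eq_left hi.2, max_eq_right (hi.1.trans hi'), min_eq_left (hi'.trans hi.2),
            max_eq_right hi.1]
        · rw [eq_comm, sub_eq_zero]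
          rcases not_and_or.1 hi with ha | hb
          · have ha := Fin.castSucc_lt_iff_succ_le.1 (not_le.1 ha)
            rw [max_eq_left ((min_le_left _ _).trans ha),
              max_eq_left ((min_le_left _ _).trans (i.castSucc_lt_succ.le.trans ha))]
          · have hb := Fin.le_castSucc_iff.2 (not_le.1 hb)
            rw [min_eq_right (hb.trans i.castSucc_lt_succ.le), min_eq_right hb]
    _ = y b - y a := by
      rw [Fin.sum_succ_sub_castSucc]
      simp only [g, min_eq_right (Fin.le_last b), max_eq_right hab, Fin.zero_le, min_eq_left,
        max_eq_left]

theorem exists_image_Icc_eq_Icc {m : ℕ} {y : Fin (m + 1) → ℝ} (hy : StrictMono y)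
    {f : ℝ → ℝ} {lam : ℝ}
    (hslope : ∀ j : Fin m, ∃ c, |c| = lam ∧ HasSlopeOn f c (Icc (y j.castSucc) (y j.succ)))
    (hinv : ∀ i, ∃ k, f (y i) = y k) (j : Fin m) :
    ∃ a b, a ≤ b ∧ f '' Icc (y j.castSucc) (y j.succ) = Icc (y a) (y b) ∧
      y b - y a = lam * (y j.succ - y j.castSucc) := by
  obtain ⟨c, rfl, hf⟩ := hslope j
  obtain ⟨a, ha⟩ := hinv j.castSucc
  obtain ⟨b, hb⟩ := hinv j.succ
  have hle : y j.castSucc ≤ y j.succ := (hy j.castSucc_lt_succ).le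
  rw [← uIcc_of_le hle] at hf ⊢
  refine ⟨min a b, max a b, min_le_max, ?_, ?_⟩
  · rw [hf.image_uIcc, ha, hb, hy.monotone.map_min, hy.monotone.map_max]
    rfl
  · rw [hy.monotone.map_max, hy.monotone.map_min, max_sub_min_eq_abs, ← ha, ← hb,
      hf.abs_sub_eq right_mem_uIcc left_mem_uIcc, abs_of_nonneg (sub_nonneg.2 hle)]

theorem exists_transition_matrix {m : ℕ} {y : Fin (m + 1) → ℝ} (hy : StrictMono y)
    {f : ℝ → ℝ} {lam : ℝ}
    (hslope : ∀ j : Fin m, ∃ c, |c| = lam ∧ HasSlopeOn f c (Icc (y j.castSucc) (y j.succ)))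
    (hinv : ∀ i, ∃ k, f (y i) = y k) :
    ∃ M : Matrix (Fin m) (Fin m) ℝ, (∀ i j, M i j = 0 ∨ M i j = 1) ∧
      (∀ i j, M i j = 1 ↔
        Icc (y i.castSucc) (y i.succ) ⊆ f '' Icc (y j.castSucc) (y j.succ)) ∧
      M.transpose.mulVec (fun j => y j.succ - y j.castSucc)
        = lam • fun j => y j.succ - y j.castSucc := by
  classical
  refine ⟨.of fun i j => if Icc (y i.castSucc) (y i.succ) ⊆ f '' Icc (y j.castSucc) (y j.succ)
    then 1 else 0, fun i j => by simp only [Matrix.of_apply]; split_ifs <;> simp,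
    fun i j => by simp only [Matrix.of_apply]; split_ifs <;> simpa, ?_⟩
  funext j
  obtain ⟨a, b, hab, himg, hlen⟩ := exists_image_Icc_eq_Icc hy hslope hinv j
  simp only [Matrix.mulVec, dotProduct, Matrix.transpose_apply, Matrix.of_apply, himg,
    Pi.smul_apply, smul_eq_mul]
  rw [sum_ite_Icc_subset_Icc_mul_sub hy hab, hlen]

theorem Fin.exists_orderEmbedding_range_eq {n : ℕ} (S : Set (Fin (n + 1))) (h0 : 0 ∈ S)
    (hlast : Fin.last n ∈ S) :
    ∃ (m : ℕ) (e : Fin (m + 1) ↪o Fin (n + 1)),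
      range e = S ∧ e 0 = 0 ∧ e (Fin.last m) = Fin.last n := by
  classical
  obtain ⟨m, hm⟩ : ∃ m, S.toFinset.card = m + 1 :=
    Nat.exists_eq_add_one.2 (Finset.card_pos.2 ⟨0, by simpa⟩)
  refine ⟨m, S.toFinset.orderEmbOfFin hm, by simp, ?_, ?_⟩
  · exact (Finset.orderEmbOfFin_zero hm m.succ_pos).trans
      (le_antisymm (Finset.min'_le _ _ (by simpa)) (Fin.zero_le _))
  · exact (Finset.orderEmbOfFin_last hm m.succ_pos).trans
      (le_antisymm (Fin.le_last _) (Finset.le_max' _ _ (by simpa)))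

theorem notMem_range_of_apply_castSucc_lt_of_lt_apply_succ {α : Type*} [Preorder α] {m : ℕ}
    (e : Fin (m + 1) ↪o α) {j : Fin m} {k : α} (h₁ : e j.castSucc < k) (h₂ : k < e j.succ) :
    k ∉ range e := by
  rintro ⟨i, rfl⟩
  rw [e.lt_iff_lt] at h₁ h₂
  exact (Fin.castSucc_lt_iff_succ_le.1 h₁).not_gt h₂

/-- Let `h : [0,1] → [0,1]` be piecewise linear with constant slope
`±lam`, `lam > 1`, relative to break points `0 = x_0 < ⋯ < x_n = 1` permuted by `h` via
`φ`. Suppose a cycle `C` of `φ` contains no topological critical point of `h` (every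
`x_i` with `i ∈ C` is interior and `h` is locally injective there). Then removing the
points of that cycle from the partition yields a coarser partition on which `h` is
still piecewise linear with slope `±lam`, and the associated transition matrix is again
a `{0,1}`-matrix with the same leading eigenvalue `lam` (having the vector of interval
lengths as positive left eigenvector). -/
theorem remove_noncritical_cycle
    (n : ℕ) (x : Fin (n + 1) → ℝ) (hmono : StrictMono x)
    (hx0 : x 0 = 0) (hxn : x (Fin.last n) = 1)
    (lam : ℝ) (hlam : 1 < lam)
    (h : ℝ → ℝ)
    -- h is piecewise linear with constant absolute slope lam on each partition interval
    (hpl : ∀ j : Fin n, (MonotoneOn h (Set.Icc (x j.castSucc) (x j.succ)) ∨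
        AntitoneOn h (Set.Icc (x j.castSucc) (x j.succ))) ∧
      ∀ u ∈ Set.Icc (x j.castSucc) (x j.succ), ∀ v ∈ Set.Icc (x j.castSucc) (x j.succ),
        |h u - h v| = lam * |u - v|)
    (φ : Equiv.Perm (Fin (n + 1)))
    (hφ : ∀ i, h (x i) = x (φ i))
    -- C is a cycle of φ ...
    (C : Set (Fin (n + 1)))
    (hCinv : ∀ i, i ∈ C ↔ φ i ∈ C)
    -- ... containing no critical point of h: each of its points is interior and h is
    -- locally injective (hence monotone) on the two adjacent intervals together
    (hnoncrit : ∀ i ∈ C, ∃ hi0 : 0 < (i : ℕ), ∃ hin : (i : ℕ) < n,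
      Set.InjOn h (Set.Icc (x ⟨(i : ℕ) - 1, by omega⟩) (x ⟨(i : ℕ) + 1, by omega⟩))) :
    ∃ (m : ℕ) (y : Fin (m + 1) → ℝ),
      StrictMono y ∧ y 0 = 0 ∧ y (Fin.last m) = 1 ∧
      Set.range y = x '' {i | i ∉ C} ∧
      -- h is still piecewise linear with slope ±lam on the coarser partition
      (∀ j : Fin m, (MonotoneOn h (Set.Icc (y j.castSucc) (y j.succ)) ∨
          AntitoneOn h (Set.Icc (y j.castSucc) (y j.succ))) ∧
        ∀ u ∈ Set.Icc (y j.castSucc) (y j.succ), ∀ v ∈ Set.Icc (y j.castSucc) (y j.succ),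
          |h u - h v| = lam * |u - v|) ∧
      -- the new transition matrix is a {0,1}-matrix with leading eigenvalue lam
      ∃ M' : Matrix (Fin m) (Fin m) ℝ,
        (∀ i j, M' i j = 0 ∨ M' i j = 1) ∧
        (∀ i j, M' i j = 1 ↔
          Set.Icc (y i.castSucc) (y i.succ) ⊆ h '' Set.Icc (y j.castSucc) (y j.succ)) ∧
        M'.transpose.mulVec (fun j => y j.succ - y j.castSucc)
          = lam • fun j => y j.succ - y j.castSucc := by
  classical
  have hpiece (j : Fin n) : ∃ c, |c| = lam ∧ HasSlopeOn h c (Icc (x j.castSucc) (x j.succ)) :=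
    exists_abs_eq_hasSlopeOn (by linarith) (hpl j).1 (hpl j).2
  obtain ⟨m, e, he, he0, helast⟩ := Fin.exists_orderEmbedding_range_eq Cᶜ
    (fun h0 => by obtain ⟨h0, -⟩ := hnoncrit 0 h0; simp at h0)
    (fun hl => by obtain ⟨-, hl, -⟩ := hnoncrit _ hl; simp at hl)
  set y := x ∘ e
  have hy : StrictMono y := hmono.comp e.strictMono
  have hslope (j : Fin m) : ∃ c, |c| = lam ∧ HasSlopeOn h c (Icc (y j.castSucc) (y j.succ)) :=
    exists_abs_eq_hasSlopeOn_Icc_fin hmono hpiece (e.strictMono j.castSucc_lt_succ)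
      fun k h₁ h₂ => hnoncrit k <| by_contra fun hk =>
        notMem_range_of_apply_castSucc_lt_of_lt_apply_succ e h₁ h₂ (he ▸ hk)
  have hinv (i : Fin (m + 1)) : ∃ k, h (y i) = y k := by
    have hi : e i ∈ Cᶜ := he ▸ mem_range_self i
    obtain ⟨k, hk⟩ : φ (e i) ∈ range e := he ▸ fun hC => hi ((hCinv _).2 hC)
    exact ⟨k, by simp [y, hφ, hk]⟩
  refine ⟨m, y, hy, by simp [y, he0, hx0], by simp [y, helast, hxn],
    by rw [range_comp, he]; rfl, fun j => ?_, exists_transition_matrix hy hslope hinv⟩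
  obtain ⟨c, hc, hf⟩ := hslope j
  exact ⟨hf.monotoneOn_or_antitoneOn, fun u hu v hv => by rw [hf.abs_sub_eq hu hv, hc]⟩
end

section
/- Let A be an integer matrix that is conjugate over ℚ to ε A^{-T} for some ε ∈ {±1}, and let λ > 1 be an eigenvalue of A that is the spectral radius of A; then every eigenvalue μ of A satisfies 1/λ ≤ |μ| ≤ λ. -/
open Matrix Polynomial

lemma charpoly_eval' {n : ℕ} {R : Type*} [CommRing R] (M : Matrix (Fin n) (Fin n) R) (x : R) :
    M.charpoly.eval x = (x • (1 : Matrix (Fin n) (Fin n) R) - M).det := by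
  rw [charpoly, eval_det, matPolyEquiv_charmatrix]
  simp [smul_eq_diagonal_mul, scalar_apply]

lemma key {n : ℕ} (B P : Matrix (Fin n) (Fin n) ℂ) (e : ℂ)
    (hP : P.det ≠ 0) (heq : Bᵀ * P * B = e • P) (μ : ℂ) (hμ : μ ≠ 0)
    (hroot : B.charpoly.IsRoot μ) : B.charpoly.IsRoot (e / μ) := by
  have h1 : ((μ : ℂ) • (1 : Matrix (Fin n) (Fin n) ℂ) - B).det = 0 := by
    rw [← charpoly_eval' B μ]; exact hroot
  have h2 : Bᵀ * P * (μ • (1 : Matrix (Fin n) (Fin n) ℂ) - B)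
      = (μ • Bᵀ - e • 1) * P := by
    rw [mul_sub, heq, mul_smul_comm, mul_one, sub_mul, smul_mul_assoc, smul_mul_assoc, one_mul]
  have h3 : (μ • Bᵀ - e • (1 : Matrix (Fin n) (Fin n) ℂ)).det * P.det = 0 := by
    rw [← det_mul, ← h2, det_mul, det_mul, h1, mul_zero]
  have h4 : (μ • Bᵀ - e • (1 : Matrix (Fin n) (Fin n) ℂ)).det = 0 := by
    rcases mul_eq_zero.mp h3 with h | h
    · exact h
    · exact absurd h hP
  have hc : (-μ) * (e / μ) = -e := by field_simp
  have h5 : μ • Bᵀ - e • (1 : Matrix (Fin n) (Fin n) ℂ)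
      = ((-μ) • ((e / μ) • (1 : Matrix (Fin n) (Fin n) ℂ) - Bᵀ)) := by
    rw [smul_sub, smul_smul, hc]
    module
  rw [h5, det_smul] at h4
  have h6 : ((e / μ) • (1 : Matrix (Fin n) (Fin n) ℂ) - Bᵀ).det = 0 := by
    rcases mul_eq_zero.mp h4 with h | h
    · exact absurd h (pow_ne_zero _ (neg_ne_zero.mpr hμ))
    · exact h
  have h7 : ((e / μ) • (1 : Matrix (Fin n) (Fin n) ℂ) - B).det = 0 := by
    have ht : ((e / μ) • (1 : Matrix (Fin n) (Fin n) ℂ) - B)ᵀ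
        = (e / μ) • (1 : Matrix (Fin n) (Fin n) ℂ) - Bᵀ := by
      rw [transpose_sub, transpose_smul, transpose_one]
    rw [← det_transpose, ht, h6]
  rw [IsRoot, charpoly_eval', h7]



/-- algebraic form of Fried's theorem. If `lam > 1` is an eigenvalue
of an integer matrix `A` that is conjugate over `ℚ` to `ε • A⁻ᵀ` for some `ε ∈ {±1}`,
and `lam` is the spectral radius of `A`, then every (complex) eigenvalue `μ` of `A`
satisfies `1/lam ≤ |μ| ≤ lam`; so `lam` is bi-Perron if it is Perron. -/
theorem dilatation_is_biPerron
    (n : ℕ) (A : Matrix (Fin n) (Fin n) ℤ)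
    (hA : IsUnit ((A.map (Int.cast : ℤ → ℚ)).det))
    (ε : ℚ) (hε : ε = 1 ∨ ε = -1)
    -- A is conjugate over ℚ to ε • A⁻ᵀ
    (hconj : ∃ P : Matrix (Fin n) (Fin n) ℚ, IsUnit P.det ∧
      P * (A.map (Int.cast : ℤ → ℚ)) =
        (ε • ((A.map (Int.cast : ℤ → ℚ))⁻¹).transpose) * P)
    (lam : ℝ) (hgt : 1 < lam)
    -- lam is an eigenvalue of A and is its spectral radius
    (hroot : ((A.map (Int.cast : ℤ → ℂ)).charpoly).IsRoot (lam : ℂ))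
    (hspec : ∀ μ : ℂ, ((A.map (Int.cast : ℤ → ℂ)).charpoly).IsRoot μ →
      ‖μ‖ ≤ lam) :
    ∀ μ : ℂ, ((A.map (Int.cast : ℤ → ℂ)).charpoly).IsRoot μ →
      1 / lam ≤ ‖μ‖ ∧ ‖μ‖ ≤ lam := by
  intro μ hμroot
  refine ⟨?_, hspec μ hμroot⟩
  set Aq : Matrix (Fin n) (Fin n) ℚ := A.map (Int.cast : ℤ → ℚ) with hAq
  set B : Matrix (Fin n) (Fin n) ℂ := A.map (Int.cast : ℤ → ℂ) with hB
  obtain ⟨P, hPdet, hPeq⟩ := hconj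
  have hratl : Aqᵀ * P * Aq = ε • P := by
    have h : Aqᵀ * P * Aq = Aqᵀ * ((ε • Aq⁻¹ᵀ) * P) := by rw [mul_assoc, hPeq]
    rw [h, ← mul_assoc, mul_smul_comm, ← transpose_mul, Matrix.nonsing_inv_mul _ hA,
      transpose_one, smul_mul_assoc, one_mul]
  let φ : ℚ →+* ℂ := Rat.castHom ℂ
  have hBq : B = Aq.map φ := by
    ext i j
    simp [hB, hAq, φ]
  have hmap : Bᵀ * (P.map φ) * B = (ε : ℂ) • (P.map φ) := by
    rw [hBq]
    calc (Aq.map φ)ᵀ * (P.map φ) * (Aq.map φ)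
        = (Aqᵀ.map φ) * (P.map φ) * (Aq.map φ) := by rw [Matrix.transpose_map]
      _ = ((Aqᵀ * P * Aq).map φ) := by
          rw [Matrix.map_mul (f := φ), Matrix.map_mul (f := φ)]
      _ = ((ε • P).map φ) := by rw [hratl]
      _ = (ε : ℂ) • (P.map φ) := by
          ext i j; simp [Matrix.map_apply, φ]
  have hPdetC : (P.map φ).det ≠ 0 := by
    rw [← RingHom.mapMatrix_apply, ← RingHom.map_det]
    simpa [φ] using hPdet.ne_zero
  have hdetB : B.det ≠ 0 := by
    rw [hBq, ← RingHom.mapMatrix_apply, ← RingHom.map_det]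
    simpa [φ] using hA.ne_zero
  have hμne : μ ≠ 0 := by
    intro h0
    have h := hμroot
    rw [h0, IsRoot, charpoly_eval'] at h
    simp only [zero_smul, zero_sub, det_neg] at h
    rcases mul_eq_zero.mp h with h' | h'
    · exact absurd h' (pow_ne_zero _ (by norm_num))
    · exact hdetB h'
  have hroot2 : B.charpoly.IsRoot ((ε : ℂ) / μ) :=
    key B (P.map φ) (ε : ℂ) hPdetC hmap μ hμne hμroot
  have habs : ‖(ε : ℂ) / μ‖ ≤ lam := hspec _ hroot2
  have hεabs : ‖(ε : ℂ)‖ = 1 := by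
    rcases hε with h | h <;> simp [h]
  rw [norm_div, hεabs] at habs
  have hμpos : 0 < ‖μ‖ := by
    simpa [norm_pos_iff] using hμne
  have hlpos : (0 : ℝ) < lam := lt_trans one_pos hgt
  rw [div_le_iff₀ hμpos] at habs
  rw [div_le_iff₀ hlpos]
  nlinarith
end
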